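/- arXiv:2205.11485 — 7 statements merged into one kernel-verified Lean document; each statement's English description precedes it below -/
import Mathlib

section
/- Combining both directions: for discrete random variables Z, Z', A, Y with H(Z | Z', Y) ≤ ε, the conditional mutual information I(Z; A | Y) satisfies I(Z'; Z | Y) - I(Z'; Z | A, Y) - ε ≤ I(Z; A | Y) ≤ I(Z'; Z | Y) - I(Z'; Z | A, Y) + ε. -/
open Finset

/-- pmf of a random variable `U` under weight `P` on a finite sample space. -/
noncomputable def pm {Ω α : Type*} [Fintype Ω] [DecidableEq α]
    (P : Ω → ℝ) (U : Ω → α) (u : α) : ℝ :=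
  ∑ ω, if U ω = u then P ω else 0

/-- Shannon conditional entropy `H(U | V)` (natural log). -/
noncomputable def condEnt {Ω α β : Type*} [Fintype Ω] [Fintype α] [Fintype β]
    [DecidableEq α] [DecidableEq β]
    (P : Ω → ℝ) (U : Ω → α) (V : Ω → β) : ℝ :=
  -∑ u : α, ∑ v : β, pm P (fun ω => (U ω, V ω)) (u, v) *
      Real.log (pm P (fun ω => (U ω, V ω)) (u, v) / pm P V v)

/-- Conditional mutual information `I(U ; V | W) = H(U|W) - H(U|V,W)`. -/
noncomputable def condMI {Ω α β γ : Type*} [Fintype Ω] [Fintype α] [Fintype β] [Fintype γ]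
    [DecidableEq α] [DecidableEq β] [DecidableEq γ]
    (P : Ω → ℝ) (U : Ω → α) (V : Ω → β) (W : Ω → γ) : ℝ :=
  condEnt P U W - condEnt P U (fun ω => (V ω, W ω))

/-- Kullback–Leibler divergence between pmfs on a finite set (natural log). -/
noncomputable def KL {S : Type*} [Fintype S] (P Q : S → ℝ) : ℝ :=
  ∑ x, if 0 < P x then P x * Real.log (P x / Q x) else 0

section aux
variable {Ω : Type*} [Fintype Ω] {P : Ω → ℝ}

lemma pm_nonneg {α : Type*} [DecidableEq α] (hP : ∀ ω, 0 ≤ P ω) (U : Ω → α) (u : α) :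
    0 ≤ pm P U u :=
  Finset.sum_nonneg fun ω _ => by split <;> simp [hP ω]

lemma pm_le {α β : Type*} [DecidableEq α] [DecidableEq β]
    (hP : ∀ ω, 0 ≤ P ω) {U : Ω → α} {V : Ω → β} {u : α} {v : β}
    (h : ∀ ω, U ω = u → V ω = v) :
    pm P U u ≤ pm P V v := by
  apply Finset.sum_le_sum
  intro ω _
  by_cases hc : U ω = u
  · simp [hc, h ω hc]
  · simp only [hc, if_false]
    split <;> simp [hP ω]

lemma le_pm {α : Type*} [DecidableEq α] (hP : ∀ ω, 0 ≤ P ω) (U : Ω → α) (ω : Ω) :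
    P ω ≤ pm P U (U ω) := by
  have := Finset.single_le_sum (f := fun ω' => if U ω' = U ω then P ω' else 0)
    (fun i _ => by by_cases hc : U i = U ω <;> simp [hc, hP i]) (Finset.mem_univ ω)
  simpa [pm] using this

lemma pm_congr {α β : Type*} [DecidableEq α] [DecidableEq β]
    {U : Ω → α} {V : Ω → β} {u : α} {v : β} (h : ∀ ω, U ω = u ↔ V ω = v) :
    pm P U u = pm P V v :=
  Finset.sum_congr rfl fun ω _ => by rw [if_congr (h ω) rfl rfl]

lemma sum_pm_mul {α : Type*} [Fintype α] [DecidableEq α] (U : Ω → α) (g : α → ℝ) :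
    ∑ u, pm P U u * g u = ∑ ω, P ω * g (U ω) := by
  unfold pm
  simp only [Finset.sum_mul, ite_mul, zero_mul]
  rw [Finset.sum_comm]
  exact Finset.sum_congr rfl fun ω _ => by simp [Finset.sum_ite_eq]

lemma sum_pm {α : Type*} [Fintype α] [DecidableEq α] (hP1 : ∑ ω, P ω = 1) (U : Ω → α) :
    ∑ u, pm P U u = 1 := by
  have := sum_pm_mul (P := P) U (fun _ => 1)
  simpa [hP1] using this

lemma pm_marginal {α β : Type*} [Fintype α] [DecidableEq α] [DecidableEq β]
    (U : Ω → α) (W : Ω → β) (w : β) :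
    ∑ u, pm P (fun ω => (U ω, W ω)) (u, w) = pm P W w := by
  unfold pm
  rw [Finset.sum_comm]
  refine Finset.sum_congr rfl fun ω _ => ?_
  simp [Prod.ext_iff, ite_and, Finset.sum_ite_eq]

lemma condEnt_omega {α β : Type*} [Fintype α] [Fintype β] [DecidableEq α] [DecidableEq β]
    (P : Ω → ℝ) (U : Ω → α) (V : Ω → β) :
    condEnt P U V = -∑ ω, P ω * Real.log
      (pm P (fun ω => (U ω, V ω)) (U ω, V ω) / pm P V (V ω)) := by
  have h := sum_pm_mul (P := P) (fun ω => (U ω, V ω))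
    (fun x => Real.log (pm P (fun ω => (U ω, V ω)) x / pm P V x.2))
  rw [Fintype.sum_prod_type] at h
  exact congrArg Neg.neg h

lemma condEnt_nonneg {α β : Type*} [Fintype α] [Fintype β] [DecidableEq α] [DecidableEq β]
    (hP : ∀ ω, 0 ≤ P ω) (U : Ω → α) (V : Ω → β) : 0 ≤ condEnt P U V := by
  rw [condEnt_omega, neg_nonneg]
  apply Finset.sum_nonpos
  intro ω _
  apply mul_nonpos_of_nonneg_of_nonpos (hP ω)
  apply Real.log_nonpos
  · exact div_nonneg (pm_nonneg hP _ _) (pm_nonneg hP _ _)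
  · exact div_le_one_of_le₀ (pm_le hP fun ω' h => congrArg Prod.snd h) (pm_nonneg hP _ _)

lemma condEnt_congr {α β γ : Type*} [Fintype α] [Fintype β] [Fintype γ]
    [DecidableEq α] [DecidableEq β] [DecidableEq γ]
    (U : Ω → α) {V : Ω → β} {V' : Ω → γ}
    (h : ∀ ω ω', V ω' = V ω ↔ V' ω' = V' ω) :
    condEnt P U V = condEnt P U V' := by
  rw [condEnt_omega, condEnt_omega]
  congr 1
  refine Finset.sum_congr rfl fun ω _ => ?_
  rw [pm_congr (U := fun ω'' => (U ω'', V ω''))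
        (V := fun ω'' => (U ω'', V' ω''))
        (u := (U ω, V ω)) (v := (U ω, V' ω)) (fun ω' => by
        simp only [Prod.mk.injEq]; exact and_congr_right fun _ => h ω ω'),
      pm_congr (U := V) (V := V') (u := V ω) (v := V' ω) (fun ω' => h ω ω')]

noncomputable def Jfun {Ω α β γ : Type*} [Fintype Ω] [DecidableEq α] [DecidableEq β]
    [DecidableEq γ] (P : Ω → ℝ) (U : Ω → α) (V : Ω → β) (W : Ω → γ) : ℝ :=
  ∑ ω, P ω * (Real.log (pm P (fun ω => (U ω, (V ω, W ω))) (U ω, (V ω, W ω)))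
    + Real.log (pm P W (W ω))
    - Real.log (pm P (fun ω => (U ω, W ω)) (U ω, W ω))
    - Real.log (pm P (fun ω => (V ω, W ω)) (V ω, W ω)))

lemma condMI_eq_J {α β γ : Type*} [Fintype α] [Fintype β] [Fintype γ]
    [DecidableEq α] [DecidableEq β] [DecidableEq γ]
    (hP : ∀ ω, 0 ≤ P ω) (U : Ω → α) (V : Ω → β) (W : Ω → γ) :
    condMI P U V W = Jfun P U V W := by
  rw [condMI, condEnt_omega, condEnt_omega, sub_neg_eq_add, neg_add_eq_sub,
    ← Finset.sum_sub_distrib, Jfun]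
  refine Finset.sum_congr rfl fun ω _ => ?_
  rcases (hP ω).eq_or_lt with h0 | h0
  · simp [← h0]
  · have h1 : 0 < pm P (fun ω => (U ω, (V ω, W ω))) (U ω, (V ω, W ω)) :=
      lt_of_lt_of_le h0 (le_pm hP _ ω)
    have h2 : 0 < pm P W (W ω) := lt_of_lt_of_le h0 (le_pm hP W ω)
    have h3 : 0 < pm P (fun ω => (U ω, W ω)) (U ω, W ω) := lt_of_lt_of_le h0 (le_pm hP _ ω)
    have h4 : 0 < pm P (fun ω => (V ω, W ω)) (V ω, W ω) := lt_of_lt_of_le h0 (le_pm hP _ ω)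
    rw [Real.log_div h1.ne' h4.ne', Real.log_div h3.ne' h2.ne']
    ring

lemma Jfun_symm {α β γ : Type*} [DecidableEq α] [DecidableEq β] [DecidableEq γ]
    (U : Ω → α) (V : Ω → β) (W : Ω → γ) :
    Jfun P U V W = Jfun P V U W := by
  refine Finset.sum_congr rfl fun ω _ => ?_
  have key : pm P (fun ω => (U ω, (V ω, W ω))) (U ω, (V ω, W ω))
      = pm P (fun ω => (V ω, (U ω, W ω))) (V ω, (U ω, W ω)) :=
    pm_congr fun ω' => by simp only [Prod.ext_iff]; tauto
  rw [key]; ring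

lemma Jfun_nonneg {α β γ : Type*} [Fintype α] [Fintype β] [Fintype γ]
    [DecidableEq α] [DecidableEq β] [DecidableEq γ]
    (hP : ∀ ω, 0 ≤ P ω) (hP1 : ∑ ω, P ω = 1) (U : Ω → α) (V : Ω → β) (W : Ω → γ) :
    0 ≤ Jfun P U V W := by
  set T : Ω → α × β × γ := fun ω => (U ω, (V ω, W ω)) with hT
  set p3 := pm P T with hp3
  set pUW := pm P (fun ω => (U ω, W ω)) with hpUW
  set pVW := pm P (fun ω => (V ω, W ω)) with hpVW
  set pW := pm P W with hpW
  set q : α × β × γ → ℝ := fun x => pUW (x.1, x.2.2) * pVW x.2 / pW x.2.2 with hq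
  have hJ : Jfun P U V W = ∑ x : α × β × γ,
      p3 x * (Real.log (p3 x) + Real.log (pW x.2.2)
        - Real.log (pUW (x.1, x.2.2)) - Real.log (pVW x.2)) :=
    (sum_pm_mul T (fun x => Real.log (p3 x) + Real.log (pW x.2.2)
        - Real.log (pUW (x.1, x.2.2)) - Real.log (pVW x.2))).symm
  have hqnn : ∀ x, 0 ≤ q x := fun x =>
    div_nonneg (mul_nonneg (pm_nonneg hP _ _) (pm_nonneg hP _ _)) (pm_nonneg hP _ _)
  have hA : ∀ x : α × β × γ, p3 x - q x ≤
      p3 x * (Real.log (p3 x) + Real.log (pW x.2.2)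
        - Real.log (pUW (x.1, x.2.2)) - Real.log (pVW x.2)) := by
    intro x
    rcases (pm_nonneg hP T x).eq_or_lt with h0 | h0
    · rw [show p3 x = 0 from h0.symm, zero_mul, zero_sub]
      simpa using hqnn x
    · have hUW : 0 < pUW (x.1, x.2.2) :=
        lt_of_lt_of_le h0 (pm_le hP fun ω hω => by subst hω; rfl)
      have hVW : 0 < pVW x.2 :=
        lt_of_lt_of_le h0 (pm_le hP fun ω hω => by subst hω; rfl)
      have hW : 0 < pW x.2.2 :=
        lt_of_lt_of_le h0 (pm_le hP fun ω hω => by subst hω; rfl)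
      have hqpos : 0 < q x := div_pos (mul_pos hUW hVW) hW
      have hlog : Real.log (p3 x) + Real.log (pW x.2.2)
          - Real.log (pUW (x.1, x.2.2)) - Real.log (pVW x.2)
          = Real.log (p3 x / q x) := by
        rw [Real.log_div h0.ne' hqpos.ne', hq]
        dsimp only
        rw [Real.log_div (mul_pos hUW hVW).ne' hW.ne', Real.log_mul hUW.ne' hVW.ne']
        ring
      rw [hlog]
      have key := Real.log_le_sub_one_of_pos (div_pos hqpos h0)
      have hflip : Real.log (p3 x / q x) = -Real.log (q x / p3 x) := by
        rw [← Real.log_inv, inv_div]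
      have hcanc : q x / p3 x * p3 x = q x := div_mul_cancel₀ _ h0.ne'
      have := mul_le_mul_of_nonneg_left key h0.le
      rw [hflip]
      nlinarith
  have hsum3 : ∑ x : α × β × γ, p3 x = 1 := sum_pm hP1 T
  have hsumq : ∑ x : α × β × γ, q x = 1 := by
    have e1 : ∑ x : α × β × γ, q x
        = ∑ u : α, ∑ v : β, ∑ w : γ, pUW (u, w) * pVW (v, w) / pW w := by
      rw [Fintype.sum_prod_type]
      exact Finset.sum_congr rfl fun u _ => Fintype.sum_prod_type _
    have e2 : ∑ u : α, ∑ v : β, ∑ w : γ, pUW (u, w) * pVW (v, w) / pW w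
        = ∑ u : α, ∑ w : γ, ∑ v : β, pUW (u, w) * pVW (v, w) / pW w :=
      Finset.sum_congr rfl fun u _ => Finset.sum_comm
    have e3 : ∑ u : α, ∑ w : γ, ∑ v : β, pUW (u, w) * pVW (v, w) / pW w
        = ∑ w : γ, ∑ u : α, ∑ v : β, pUW (u, w) * pVW (v, w) / pW w :=
      Finset.sum_comm
    rw [e1, e2, e3]
    have step2 : ∀ w : γ, ∑ u : α, ∑ v : β, pUW (u, w) * pVW (v, w) / pW w = pW w := by
      intro w
      have : ∑ u : α, ∑ v : β, pUW (u, w) * pVW (v, w) / pW w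
          = (∑ u : α, pUW (u, w)) * (∑ v : β, pVW (v, w)) / pW w := by
        rw [Finset.sum_mul, Finset.sum_div]
        refine Finset.sum_congr rfl fun u _ => ?_
        rw [Finset.mul_sum, Finset.sum_div]
      rw [this, pm_marginal U W w, pm_marginal V W w]
      rcases eq_or_ne (pW w) 0 with h | h
      · simp [h]
      · rw [mul_div_assoc, div_self h, mul_one]
    rw [Finset.sum_congr rfl fun w _ => step2 w]
    exact sum_pm hP1 W
  have : (0 : ℝ) = ∑ x : α × β × γ, (p3 x - q x) := by
    rw [Finset.sum_sub_distrib, hsum3, hsumq, sub_self]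
  rw [hJ, this]
  exact Finset.sum_le_sum fun x _ => hA x
end aux

/-- if `H(Z | Z', Y) ≤ ε` then
`I(Z'; Z | Y) - I(Z'; Z | A, Y) - ε ≤ I(Z; A | Y) ≤ I(Z'; Z | Y) - I(Z'; Z | A, Y) + ε`. -/
theorem stmt_3 {Ω ζ ζ' 𝒜 𝒴 : Type*} [Fintype Ω] [Fintype ζ] [Fintype ζ'] [Fintype 𝒜] [Fintype 𝒴]
    [DecidableEq ζ] [DecidableEq ζ'] [DecidableEq 𝒜] [DecidableEq 𝒴]
    (P : Ω → ℝ) (hP : ∀ ω, 0 ≤ P ω) (hP1 : ∑ ω, P ω = 1)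
    (Z : Ω → ζ) (Z' : Ω → ζ') (A : Ω → 𝒜) (Y : Ω → 𝒴)
    (ε : ℝ) (hε : 0 < ε)
    (hH : condEnt P Z (fun ω => (Z' ω, Y ω)) ≤ ε) :
    condMI P Z' Z Y - condMI P Z' Z (fun ω => (A ω, Y ω)) - ε ≤ condMI P Z A Y ∧
      condMI P Z A Y ≤ condMI P Z' Z Y - condMI P Z' Z (fun ω => (A ω, Y ω)) + ε := by

  have key1 : condMI P Z' Z Y
      = condEnt P Z Y - condEnt P Z (fun ω => (Z' ω, Y ω)) := by
    rw [condMI_eq_J hP, Jfun_symm, ← condMI_eq_J hP, condMI]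
  have key2 : condMI P Z' Z (fun ω => (A ω, Y ω))
      = condEnt P Z (fun ω => (A ω, Y ω))
        - condEnt P Z (fun ω => (Z' ω, (A ω, Y ω))) := by
    rw [condMI_eq_J hP, Jfun_symm, ← condMI_eq_J hP, condMI]
  have key3 : 0 ≤ condMI P Z A (fun ω => (Z' ω, Y ω)) := by
    rw [condMI_eq_J hP]; exact Jfun_nonneg hP hP1 _ _ _
  have key4 : condEnt P Z (fun ω => (A ω, (Z' ω, Y ω)))
      = condEnt P Z (fun ω => (Z' ω, (A ω, Y ω))) :=
    condEnt_congr Z (fun ω ω' => by simp only [Prod.mk.injEq]; tauto)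
  have h5 : 0 ≤ condEnt P Z (fun ω => (Z' ω, (A ω, Y ω))) := condEnt_nonneg hP _ _
  rw [condMI, key4] at key3
  rw [key1, key2, condMI]
  constructor <;> linarith
end

section
/- For probability measures P and Q on a finite set S with Q(x) > 0 for all x ∈ S, the Kullback–Leibler divergence admits the variational representation D_KL(P || Q) = sup over functions s : S → ℝ of [E_P[s] - E_Q[exp(s)] + 1], and the supremum is attained at s*(x) = log(P(x)/Q(x)) (on the support of P). -/
open Finset

/-- Nguyen–Wainwright–Jordan variational representation of KL divergence:
`D_KL(P‖Q) = sup_s (E_P[s] - E_Q[exp s] + 1)`, attained at `s*(x) = log (P x / Q x)`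
on the support of `P` (i.e. when `P` is supported everywhere). -/
theorem stmt_5 {S : Type*} [Fintype S] [Nonempty S] (P Q : S → ℝ)
    (hP0 : ∀ x, 0 ≤ P x) (hP1 : ∑ x, P x = 1)
    (hQ0 : ∀ x, 0 < Q x) (hQ1 : ∑ x, Q x = 1) :
    (⨆ s : S → ℝ, ((∑ x, P x * s x) - (∑ x, Q x * Real.exp (s x)) + 1)) = KL P Q ∧
      ((∀ x, 0 < P x) →
        (∑ x, P x * Real.log (P x / Q x))
          - (∑ x, Q x * Real.exp (Real.log (P x / Q x))) + 1 = KL P Q) := by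
  have hkey : ∀ (a b t : ℝ), 0 ≤ a → 0 < b →
      a * t - b * Real.exp t ≤ (if 0 < a then a * Real.log (a / b) else 0) - a := by
    intro a b t ha hb
    rcases ha.lt_or_eq with h | h
    · rw [if_pos h]
      have hab : 0 < a / b := div_pos h hb
      have h1 := Real.add_one_le_exp (t - Real.log (a / b))
      have h2 : Real.exp (t - Real.log (a / b)) = Real.exp t * b / a := by
        rw [Real.exp_sub, Real.exp_log hab]
        field_simp
      rw [h2] at h1
      have h3 : (t - Real.log (a / b) + 1) * a ≤ Real.exp t * b := (le_div_iff₀ h).mp h1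
      nlinarith
    · have hne : ¬ (0 < a) := by simp [← h]
      rw [if_neg hne, ← h]
      have : 0 < b * Real.exp t := by positivity
      linarith
  have hub : ∀ s : S → ℝ, (∑ x, P x * s x) - (∑ x, Q x * Real.exp (s x)) + 1 ≤ KL P Q := by
    intro s
    have h1 : (∑ x, P x * s x) - (∑ x, Q x * Real.exp (s x))
        = ∑ x, (P x * s x - Q x * Real.exp (s x)) := by
      rw [Finset.sum_sub_distrib]
    have h2 : ∑ x, (P x * s x - Q x * Real.exp (s x))
        ≤ ∑ x, ((if 0 < P x then P x * Real.log (P x / Q x) else 0) - P x) :=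
      Finset.sum_le_sum fun x _ => hkey _ _ _ (hP0 x) (hQ0 x)
    rw [Finset.sum_sub_distrib, Finset.sum_sub_distrib, hP1] at h2
    rw [h1]
    unfold KL
    linarith
  have hbdd : BddAbove (Set.range fun s : S → ℝ =>
      (∑ x, P x * s x) - (∑ x, Q x * Real.exp (s x)) + 1) := by
    refine ⟨KL P Q, ?_⟩
    rintro _ ⟨s, rfl⟩
    exact hub s
  constructor
  · apply le_antisymm (ciSup_le hub)
    apply le_of_forall_pos_le_add
    intro ε hε
    set s : S → ℝ := fun x => if 0 < P x then Real.log (P x / Q x) else Real.log ε with hs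
    have hterm : ∀ x, (if 0 < P x then P x * Real.log (P x / Q x) else 0) - P x - ε * Q x
        ≤ P x * s x - Q x * Real.exp (s x) := by
      intro x
      by_cases h : 0 < P x
      · have hab : 0 < P x / Q x := div_pos h (hQ0 x)
        simp only [hs, if_pos h, Real.exp_log hab]
        have heq : Q x * (P x / Q x) = P x := by
          rw [mul_comm, div_mul_cancel₀ _ (hQ0 x).ne']
        rw [heq]
        nlinarith [mul_pos hε (hQ0 x)]
      · have hPx : P x = 0 := le_antisymm (not_lt.mp h) (hP0 x)
        have e1 : s x = Real.log ε := by simp [hs, h]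
        rw [e1, Real.exp_log hε, if_neg h, hPx]
        ring_nf
        exact le_refl _
    have hsum : ∑ x, ((if 0 < P x then P x * Real.log (P x / Q x) else 0) - P x - ε * Q x)
        ≤ ∑ x, (P x * s x - Q x * Real.exp (s x)) :=
      Finset.sum_le_sum fun x _ => hterm x
    rw [Finset.sum_sub_distrib, Finset.sum_sub_distrib, hP1, ← Finset.mul_sum, hQ1] at hsum
    have hF : KL P Q - ε ≤ (∑ x, P x * s x) - (∑ x, Q x * Real.exp (s x)) + 1 := by
      rw [Finset.sum_sub_distrib] at *
      unfold KL
      linarith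
    have := le_ciSup hbdd s
    linarith
  · intro hP
    have h1 : ∀ x, Q x * Real.exp (Real.log (P x / Q x)) = P x := by
      intro x
      rw [Real.exp_log (div_pos (hP x) (hQ0 x)), mul_comm,
        div_mul_cancel₀ _ (hQ0 x).ne']
    have h2 : (∑ x, Q x * Real.exp (Real.log (P x / Q x))) = 1 := by
      simp_rw [h1]; exact hP1
    have h3 : KL P Q = ∑ x, P x * Real.log (P x / Q x) := by
      unfold KL
      exact Finset.sum_congr rfl fun x _ => if_pos (hP x)
    rw [h2, h3]
    ring
end

section
/- For probability measures P and Q on a finite set S with Q strictly positive, and for every function s : S → ℝ, the inequality E_P[s] - E_Q[exp(s)] + 1 ≤ D_KL(P || Q) holds. -/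
open Finset

/-- for every critic `s`, `E_P[s] - E_Q[exp s] + 1 ≤ D_KL(P‖Q)`. -/
theorem stmt_6 {S : Type*} [Fintype S] (P Q : S → ℝ)
    (hP0 : ∀ x, 0 ≤ P x) (hP1 : ∑ x, P x = 1)
    (hQ0 : ∀ x, 0 < Q x) (hQ1 : ∑ x, Q x = 1)
    (s : S → ℝ) :
    (∑ x, P x * s x) - (∑ x, Q x * Real.exp (s x)) + 1 ≤ KL P Q := by
  have key : ∀ x, P x * s x - Q x * Real.exp (s x) + P x ≤
      (if 0 < P x then P x * Real.log (P x / Q x) else 0) := by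
    intro x
    by_cases h : 0 < P x
    · simp only [if_pos h]
      have ht : Real.log (Q x * Real.exp (s x) / P x) ≤ Q x * Real.exp (s x) / P x - 1 :=
        Real.log_le_sub_one_of_pos (div_pos (mul_pos (hQ0 x) (Real.exp_pos _)) h)
      have hlog : Real.log (Q x * Real.exp (s x) / P x)
          = Real.log (Q x) + s x - Real.log (P x) := by
        rw [Real.log_div (ne_of_gt (mul_pos (hQ0 x) (Real.exp_pos _))) (ne_of_gt h),
          Real.log_mul (ne_of_gt (hQ0 x)) (Real.exp_ne_zero _), Real.log_exp]
      have h2 : P x * (Real.log (Q x) + s x - Real.log (P x)) ≤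
          P x * (Q x * Real.exp (s x) / P x - 1) := by
        rw [← hlog]; exact mul_le_mul_of_nonneg_left ht h.le
      rw [Real.log_div (ne_of_gt h) (ne_of_gt (hQ0 x))]
      have h3 : P x * (Q x * Real.exp (s x) / P x - 1) = Q x * Real.exp (s x) - P x := by
        field_simp
      nlinarith [h2]
    · have hP : P x = 0 := le_antisymm (not_lt.mp h) (hP0 x)
      rw [if_neg h, hP]
      nlinarith [mul_pos (hQ0 x) (Real.exp_pos (s x))]
  calc (∑ x, P x * s x) - (∑ x, Q x * Real.exp (s x)) + 1
      = ∑ x, (P x * s x - Q x * Real.exp (s x) + P x) := by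
        rw [Finset.sum_add_distrib, Finset.sum_sub_distrib, hP1]
    _ ≤ KL P Q := Finset.sum_le_sum fun x _ => key x
end

section
/- Let P and Q be probability measures on a finite product-type space Z × Z with Q strictly positive, and let N ≥ 1. For any function s : Z × Z → ℝ, the quantity E[ log( exp(s(z', z_1)) / ( (1/N) Σ_{j=1}^N exp(s(z', z_j)) ) ) ], where (z', z_1) ~ P and z_2, ..., z_N are drawn i.i.d. from the conditional Q(·|z') (independently of z_1 given z'), is at most D_KL(P || Q). Consequently the supremum over s of this quantity is at most D_KL(P || Q). -/
open Finset

lemma sum_prod_fn {Z : Type*} [Fintype Z] [DecidableEq Z] (M : ℕ) (f : Z → ℝ) :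
    ∑ w : Fin M → Z, ∏ j, f (w j) = (∑ t, f t) ^ M := by
  have h := Finset.prod_univ_sum (fun _ : Fin M => (univ : Finset Z)) (fun _ x => f x)
  simp only [Fintype.piFinset_univ] at h
  rw [← h, Finset.prod_const, Finset.card_univ, Fintype.card_fin]

lemma key_ident {Z : Type*} [Fintype Z] [DecidableEq Z] [Nonempty Z] (M : ℕ) (μ a : Z → ℝ)
    (hμ0 : ∀ t, 0 ≤ μ t) (hμ1 : ∑ t, μ t = 1) (ha : ∀ t, 0 < a t) :
    ∑ z1, ∑ w : Fin M → Z, (μ z1 * ∏ j, μ (w j)) * (a z1 / (a z1 + ∑ j, a (w j)))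
      = 1 / (M + 1) := by
  set F : Fin (M + 1) → ℝ := fun k =>
    ∑ v : Fin (M + 1) → Z, (∏ i, μ (v i)) * (a (v k) / ∑ i, a (v i)) with hF
  have hpos : ∀ v : Fin (M + 1) → Z, 0 < ∑ i, a (v i) := fun v =>
    Finset.sum_pos (fun i _ => ha _) univ_nonempty
  have hFk : ∀ k, F k = F 0 := by
    intro k
    rw [hF]
    refine Fintype.sum_equiv (Equiv.arrowCongr (Equiv.swap 0 k) (Equiv.refl Z)) _ _ ?_
    intro u
    simp only [Equiv.arrowCongr_apply, Function.comp, Equiv.refl_apply, Equiv.symm_swap]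
    rw [Equiv.prod_comp (Equiv.swap 0 k) (fun i => μ (u i)),
        Equiv.sum_comp (Equiv.swap 0 k) (fun i => a (u i)), Equiv.swap_apply_left]
  have hsum : ∑ k, F k = 1 := by
    rw [hF]
    rw [Finset.sum_comm]
    have : ∀ v : Fin (M + 1) → Z,
        ∑ k, (∏ i, μ (v i)) * (a (v k) / ∑ i, a (v i)) = ∏ i, μ (v i) := by
      intro v
      rw [← Finset.mul_sum, ← Finset.sum_div, div_self (hpos v).ne', mul_one]
    rw [Finset.sum_congr rfl (fun v _ => this v)]
    rw [sum_prod_fn, hμ1, one_pow]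
  have hF0 : F 0 = 1 / (M + 1) := by
    have h2 : ∑ k : Fin (M + 1), F k = (M + 1) * F 0 := by
      rw [Finset.sum_congr rfl (fun k _ => hFk k), Finset.sum_const, Finset.card_univ,
        Fintype.card_fin, nsmul_eq_mul]
      push_cast
      ring
    rw [h2] at hsum
    field_simp at hsum ⊢
    linarith
  have hprod : F 0 = ∑ p : Z × (Fin M → Z),
      (μ p.1 * ∏ j, μ (p.2 j)) * (a p.1 / (a p.1 + ∑ j, a (p.2 j))) := by
    simp only [hF]
    refine Fintype.sum_equiv (Fin.consEquiv fun _ => Z).symm _ _ ?_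
    intro v
    simp [Fin.consEquiv, Fin.tail, Fin.prod_univ_succ, Fin.sum_univ_succ]
  rw [← hF0, hprod, Fintype.sum_prod_type]

lemma pointwise_bound (p q r : ℝ) (hp : 0 ≤ p) (hq : 0 < q) (hr : 0 < r) :
    p * Real.log r ≤ (if 0 < p then p * Real.log (p / q) else 0) + q * r - p := by
  rcases eq_or_lt_of_le hp with h | h
  · rw [if_neg (by rw [← h]; exact lt_irrefl 0), ← h]
    have : 0 ≤ q * r := by positivity
    linarith
  · rw [if_pos h]
    have h1 : Real.log (r * q / p) ≤ r * q / p - 1 :=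
      Real.log_le_sub_one_of_pos (by positivity)
    have h2 : Real.log (r * q / p) = Real.log r - Real.log (p / q) := by
      rw [Real.log_div (by positivity) h.ne', Real.log_mul hr.ne' hq.ne',
          Real.log_div h.ne' hq.ne']
      ring
    have h3 := mul_le_mul_of_nonneg_left h1 h.le
    have h4 : p * (r * q / p - 1) = q * r - p := by field_simp
    rw [h4, h2, mul_sub] at h3
    linarith

/-- the InfoNCE-style objective with `N-1` negatives drawn i.i.d. from the
conditional `Q(·|z')` is at most `D_KL(P‖Q)`, for every critic `s`; consequently its
supremum over critics is at most `D_KL(P‖Q)`. -/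
theorem stmt_7 {Z : Type*} [Fintype Z] [DecidableEq Z] (N : ℕ) (hN : 1 ≤ N)
    (P Q : Z × Z → ℝ)
    (hP0 : ∀ p, 0 ≤ P p) (hP1 : ∑ p, P p = 1)
    (hQ0 : ∀ p, 0 < Q p) (hQ1 : ∑ p, Q p = 1)
    (hmarg : ∀ z' : Z, ∑ z, P (z', z) = ∑ z, Q (z', z)) :
    (∀ s : Z × Z → ℝ,
      (∑ z' : Z, ∑ z1 : Z, P (z', z1) *
        ∑ w : Fin (N - 1) → Z, (∏ j, (Q (z', w j) / ∑ t, Q (z', t))) *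
          Real.log (Real.exp (s (z', z1)) /
            ((1 / (N : ℝ)) *
              (Real.exp (s (z', z1)) + ∑ j : Fin (N - 1), Real.exp (s (z', w j))))))
        ≤ KL P Q) ∧
    (⨆ s : Z × Z → ℝ,
      (∑ z' : Z, ∑ z1 : Z, P (z', z1) *
        ∑ w : Fin (N - 1) → Z, (∏ j, (Q (z', w j) / ∑ t, Q (z', t))) *
          Real.log (Real.exp (s (z', z1)) /
            ((1 / (N : ℝ)) *
              (Real.exp (s (z', z1)) + ∑ j : Fin (N - 1), Real.exp (s (z', w j)))))))
        ≤ KL P Q := by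
  have hZ : Nonempty Z := by
    by_contra h
    rw [not_nonempty_iff] at h
    have : (∑ p : Z × Z, P p) = 0 := by simp
    rw [hP1] at this; norm_num at this
  obtain ⟨M, rfl⟩ : ∃ M, N = M + 1 := ⟨N - 1, (Nat.succ_pred_eq_of_pos hN).symm⟩
  have main : ∀ s : Z × Z → ℝ,
      (∑ z' : Z, ∑ z1 : Z, P (z', z1) *
        ∑ w : Fin (M + 1 - 1) → Z, (∏ j, (Q (z', w j) / ∑ t, Q (z', t))) *
          Real.log (Real.exp (s (z', z1)) /
            ((1 / ((M + 1 : ℕ) : ℝ)) *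
              (Real.exp (s (z', z1)) + ∑ j : Fin (M + 1 - 1), Real.exp (s (z', w j))))))
        ≤ KL P Q := by
    intro s
    show (∑ z' : Z, ∑ z1 : Z, P (z', z1) *
        ∑ w : Fin M → Z, (∏ j, (Q (z', w j) / ∑ t, Q (z', t))) *
          Real.log (Real.exp (s (z', z1)) /
            ((1 / ((M + 1 : ℕ) : ℝ)) *
              (Real.exp (s (z', z1)) + ∑ j : Fin M, Real.exp (s (z', w j))))))
        ≤ KL P Q
    push_cast
    have hq : ∀ z' : Z, 0 < ∑ t, Q (z', t) :=
      fun z' => Finset.sum_pos (fun t _ => hQ0 _) univ_nonempty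
    have hMR : (0 : ℝ) < (M : ℝ) + 1 := by positivity
    -- positivity of r
    have hrpos : ∀ (z' z1 : Z) (w : Fin M → Z),
        0 < Real.exp (s (z', z1)) /
            ((1 / ((M : ℝ) + 1)) *
              (Real.exp (s (z', z1)) + ∑ j : Fin M, Real.exp (s (z', w j)))) := by
      intro z' z1 w
      have hS : 0 ≤ ∑ j : Fin M, Real.exp (s (z', w j)) :=
        Finset.sum_nonneg fun j _ => (Real.exp_pos _).le
      have hE := Real.exp_pos (s (z', z1))
      positivity
    have hπ0 : ∀ (z' : Z) (w : Fin M → Z), 0 ≤ ∏ j, (Q (z', w j) / ∑ t, Q (z', t)) :=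
      fun z' w => Finset.prod_nonneg fun j _ => div_nonneg (hQ0 _).le (hq z').le
    have hπ1 : ∀ z' : Z, ∑ w : Fin M → Z, ∏ j, (Q (z', w j) / ∑ t, Q (z', t)) = 1 := by
      intro z'
      rw [sum_prod_fn M (fun t => Q (z', t) / ∑ t, Q (z', t))]
      rw [← Finset.sum_div, div_self (hq z').ne', one_pow]
    -- per (z', z1) bound
    have claim : ∀ z' z1 : Z,
        P (z', z1) *
          ∑ w : Fin M → Z, (∏ j, (Q (z', w j) / ∑ t, Q (z', t))) *
            Real.log (Real.exp (s (z', z1)) /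
              ((1 / ((M : ℝ) + 1)) *
                (Real.exp (s (z', z1)) + ∑ j : Fin M, Real.exp (s (z', w j)))))
        ≤ (if 0 < P (z', z1) then P (z', z1) * Real.log (P (z', z1) / Q (z', z1)) else 0)
          + (∑ w : Fin M → Z, (∏ j, (Q (z', w j) / ∑ t, Q (z', t))) *
              (Q (z', z1) * (Real.exp (s (z', z1)) /
                ((1 / ((M : ℝ) + 1)) *
                  (Real.exp (s (z', z1)) + ∑ j : Fin M, Real.exp (s (z', w j)))))))
          - P (z', z1) := by
      intro z' z1
      rw [Finset.mul_sum]
      have step : ∀ w : Fin M → Z,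
          P (z', z1) * ((∏ j, (Q (z', w j) / ∑ t, Q (z', t))) *
            Real.log (Real.exp (s (z', z1)) /
              ((1 / ((M : ℝ) + 1)) *
                (Real.exp (s (z', z1)) + ∑ j : Fin M, Real.exp (s (z', w j))))))
          ≤ (∏ j, (Q (z', w j) / ∑ t, Q (z', t))) *
            ((if 0 < P (z', z1) then P (z', z1) * Real.log (P (z', z1) / Q (z', z1)) else 0)
              + Q (z', z1) * (Real.exp (s (z', z1)) /
                ((1 / ((M : ℝ) + 1)) *
                  (Real.exp (s (z', z1)) + ∑ j : Fin M, Real.exp (s (z', w j)))))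
              - P (z', z1)) := by
        intro w
        have hpb := pointwise_bound (P (z', z1)) (Q (z', z1)) _ (hP0 _) (hQ0 _)
          (hrpos z' z1 w)
        calc P (z', z1) * ((∏ j, (Q (z', w j) / ∑ t, Q (z', t))) *
              Real.log (Real.exp (s (z', z1)) /
                ((1 / ((M : ℝ) + 1)) *
                  (Real.exp (s (z', z1)) + ∑ j : Fin M, Real.exp (s (z', w j))))))
            = (∏ j, (Q (z', w j) / ∑ t, Q (z', t))) *
              (P (z', z1) * Real.log (Real.exp (s (z', z1)) /
                ((1 / ((M : ℝ) + 1)) *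
                  (Real.exp (s (z', z1)) + ∑ j : Fin M, Real.exp (s (z', w j)))))) := by ring
          _ ≤ _ := by
              apply mul_le_mul_of_nonneg_left _ (hπ0 z' w)
              linarith [hpb]
      calc ∑ w : Fin M → Z, P (z', z1) * ((∏ j, (Q (z', w j) / ∑ t, Q (z', t))) *
            Real.log (Real.exp (s (z', z1)) /
              ((1 / ((M : ℝ) + 1)) *
                (Real.exp (s (z', z1)) + ∑ j : Fin M, Real.exp (s (z', w j))))))
          ≤ ∑ w : Fin M → Z, (∏ j, (Q (z', w j) / ∑ t, Q (z', t))) *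
            ((if 0 < P (z', z1) then P (z', z1) * Real.log (P (z', z1) / Q (z', z1)) else 0)
              + Q (z', z1) * (Real.exp (s (z', z1)) /
                ((1 / ((M : ℝ) + 1)) *
                  (Real.exp (s (z', z1)) + ∑ j : Fin M, Real.exp (s (z', w j)))))
              - P (z', z1)) := Finset.sum_le_sum fun w _ => step w
        _ = _ := by
            simp only [mul_sub, mul_add, Finset.sum_sub_distrib, Finset.sum_add_distrib,
              ← Finset.sum_mul]
            rw [hπ1 z']
            ring
    -- the per-z' identity for the middle term
    have ident : ∀ z' : Z,
        ∑ z1 : Z, ∑ w : Fin M → Z, (∏ j, (Q (z', w j) / ∑ t, Q (z', t))) *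
            (Q (z', z1) * (Real.exp (s (z', z1)) /
              ((1 / ((M : ℝ) + 1)) *
                (Real.exp (s (z', z1)) + ∑ j : Fin M, Real.exp (s (z', w j))))))
        = ∑ t, Q (z', t) := by
      intro z'
      have hk := key_ident M (fun t => Q (z', t) / ∑ t, Q (z', t))
        (fun t => Real.exp (s (z', t)))
        (fun t => div_nonneg (hQ0 _).le (hq z').le)
        (by rw [← Finset.sum_div, div_self (hq z').ne'])
        (fun t => Real.exp_pos _)
      have hrw : ∀ (z1 : Z) (w : Fin M → Z),
          (∏ j, (Q (z', w j) / ∑ t, Q (z', t))) *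
            (Q (z', z1) * (Real.exp (s (z', z1)) /
              ((1 / ((M : ℝ) + 1)) *
                (Real.exp (s (z', z1)) + ∑ j : Fin M, Real.exp (s (z', w j))))))
          = ((∑ t, Q (z', t)) * ((M : ℝ) + 1)) *
            (((Q (z', z1) / ∑ t, Q (z', t)) * ∏ j, (Q (z', w j) / ∑ t, Q (z', t))) *
              (Real.exp (s (z', z1)) /
                (Real.exp (s (z', z1)) + ∑ j : Fin M, Real.exp (s (z', w j))))) := by
        intro z1 w
        have hS : 0 < Real.exp (s (z', z1)) + ∑ j : Fin M, Real.exp (s (z', w j)) := by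
          have : 0 ≤ ∑ j : Fin M, Real.exp (s (z', w j)) :=
            Finset.sum_nonneg fun j _ => (Real.exp_pos _).le
          linarith [Real.exp_pos (s (z', z1))]
        have h1 : Real.exp (s (z', z1)) /
            ((1 / ((M : ℝ) + 1)) *
              (Real.exp (s (z', z1)) + ∑ j : Fin M, Real.exp (s (z', w j))))
            = ((M : ℝ) + 1) * (Real.exp (s (z', z1)) /
              (Real.exp (s (z', z1)) + ∑ j : Fin M, Real.exp (s (z', w j)))) := by
          rw [div_mul_eq_div_div, div_div_eq_mul_div, ← mul_div_assoc]
          ring_nf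
        rw [h1]
        have h2 : Q (z', z1) = (∑ t, Q (z', t)) * (Q (z', z1) / ∑ t, Q (z', t)) := by
          rw [mul_div_cancel₀ _ (hq z').ne']
        conv_lhs => rw [h2]
        ring
      calc ∑ z1 : Z, ∑ w : Fin M → Z, _
          = ∑ z1 : Z, ∑ w : Fin M → Z, ((∑ t, Q (z', t)) * ((M : ℝ) + 1)) *
            (((Q (z', z1) / ∑ t, Q (z', t)) * ∏ j, (Q (z', w j) / ∑ t, Q (z', t))) *
              (Real.exp (s (z', z1)) /
                (Real.exp (s (z', z1)) + ∑ j : Fin M, Real.exp (s (z', w j))))) := by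
            exact Finset.sum_congr rfl fun z1 _ => Finset.sum_congr rfl fun w _ => hrw z1 w
        _ = ((∑ t, Q (z', t)) * ((M : ℝ) + 1)) *
            ∑ z1 : Z, ∑ w : Fin M → Z,
              (((Q (z', z1) / ∑ t, Q (z', t)) * ∏ j, (Q (z', w j) / ∑ t, Q (z', t))) *
                (Real.exp (s (z', z1)) /
                  (Real.exp (s (z', z1)) + ∑ j : Fin M, Real.exp (s (z', w j))))) := by
            rw [Finset.mul_sum]
            exact Finset.sum_congr rfl fun z1 _ => (Finset.mul_sum _ _ _).symm
        _ = ∑ t, Q (z', t) := by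
            rw [hk]
            field_simp
    -- combine
    calc (∑ z' : Z, ∑ z1 : Z, P (z', z1) *
          ∑ w : Fin M → Z, (∏ j, (Q (z', w j) / ∑ t, Q (z', t))) *
            Real.log (Real.exp (s (z', z1)) /
              ((1 / ((M : ℝ) + 1)) *
                (Real.exp (s (z', z1)) + ∑ j : Fin M, Real.exp (s (z', w j))))))
        ≤ ∑ z' : Z, ∑ z1 : Z,
            ((if 0 < P (z', z1) then P (z', z1) * Real.log (P (z', z1) / Q (z', z1)) else 0)
              + (∑ w : Fin M → Z, (∏ j, (Q (z', w j) / ∑ t, Q (z', t))) *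
                  (Q (z', z1) * (Real.exp (s (z', z1)) /
                    ((1 / ((M : ℝ) + 1)) *
                      (Real.exp (s (z', z1)) + ∑ j : Fin M, Real.exp (s (z', w j)))))))
              - P (z', z1)) :=
          Finset.sum_le_sum fun z' _ => Finset.sum_le_sum fun z1 _ => claim z' z1
      _ = KL P Q := by
          simp only [Finset.sum_add_distrib, Finset.sum_sub_distrib]
          have e1 : ∑ z' : Z, ∑ z1 : Z,
              (if 0 < P (z', z1) then P (z', z1) * Real.log (P (z', z1) / Q (z', z1)) else 0)
              = KL P Q := by
            rw [KL, Fintype.sum_prod_type]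
          have e2 : ∑ z' : Z, ∑ z1 : Z, P (z', z1) = 1 := by
            rw [← Fintype.sum_prod_type]; exact hP1
          have e3 : ∑ z' : Z, (∑ z1 : Z, ∑ w : Fin M → Z,
              (∏ j, (Q (z', w j) / ∑ t, Q (z', t))) *
                (Q (z', z1) * (Real.exp (s (z', z1)) /
                  ((1 / ((M : ℝ) + 1)) *
                    (Real.exp (s (z', z1)) + ∑ j : Fin M, Real.exp (s (z', w j))))))) = 1 := by
            rw [Finset.sum_congr rfl fun z' _ => ident z']
            rw [← Fintype.sum_prod_type]; exact hQ1
          rw [e1, e2, e3]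
          ring
  exact ⟨main, ciSup_le main⟩
end

section
/- For probability mass functions P, Q on a finite set S with Q strictly positive, the functional F(s) = E_P[s] - E_Q[exp(s)] attains its maximum over all functions s : S → ℝ ∪ {-∞} at s*(x) = log(P(x)/Q(x)), with maximum value D_KL(P || Q) - 1. -/
open Finset

/-- Exponential extended to `ℝ ∪ {-∞}` (values in `EReal`), with `exp (-∞) = 0`. -/
noncomputable def expE (x : EReal) : ℝ :=
  if x = ⊥ then 0 else Real.exp x.toReal

lemma key_ineq (p q t : ℝ) (hp : 0 < p) (hq : 0 < q) :
    p * t - q * Real.exp t ≤ p * Real.log (p / q) - p := by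
  have hu : 0 < q * Real.exp t / p := by positivity
  have h1 : Real.log (q * Real.exp t / p) ≤ q * Real.exp t / p - 1 :=
    Real.log_le_sub_one_of_pos hu
  have h2 : Real.log (q * Real.exp t / p)
      = Real.log q + t - Real.log p := by
    rw [Real.log_div (by positivity) hp.ne', Real.log_mul hq.ne' (Real.exp_ne_zero t),
      Real.log_exp]
  have h3 : Real.log (p / q) = Real.log p - Real.log q :=
    Real.log_div hp.ne' hq.ne'
  have h4 : p * (Real.log q + t - Real.log p) ≤ p * (q * Real.exp t / p - 1) := by
    apply mul_le_mul_of_nonneg_left _ hp.le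
    rw [← h2]; exact h1
  have h5 : p * (q * Real.exp t / p) = q * Real.exp t := by
    field_simp
  nlinarith [h4, h5]

lemma sum_pos_part {S : Type*} [Fintype S] (P : S → ℝ) (hP0 : ∀ x, 0 ≤ P x)
    (hP1 : ∑ x, P x = 1) : ∑ x, (if 0 < P x then P x else 0) = 1 := by
  rw [← hP1]
  apply Finset.sum_congr rfl
  intro x _
  by_cases h : 0 < P x
  · simp [h]
  · simp [h, le_antisymm (not_lt.mp h) (hP0 x)]

/-- the functional `F(s) = E_P[s] - E_Q[exp s]` over critics
`s : S → ℝ ∪ {-∞}` attains its maximum at `s*(x) = log (P x / Q x)` (with `s* = -∞` off the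
support of `P`), and the maximum value is `D_KL(P‖Q) - 1`. -/
theorem stmt_10 {S : Type*} [Fintype S] (P Q : S → ℝ)
    (hP0 : ∀ x, 0 ≤ P x) (hP1 : ∑ x, P x = 1)
    (hQ0 : ∀ x, 0 < Q x) (hQ1 : ∑ x, Q x = 1) :
    ((∑ x, (P x : EReal) * (if 0 < P x then ((Real.log (P x / Q x) : ℝ) : EReal) else ⊥))
        - (((∑ x, Q x * expE (if 0 < P x then ((Real.log (P x / Q x) : ℝ) : EReal) else ⊥)) : ℝ) : EReal)
      = ((KL P Q - 1 : ℝ) : EReal)) ∧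
    (∀ s : S → EReal, (∀ x, s x ≠ ⊤) →
      (∑ x, (P x : EReal) * s x) - (((∑ x, Q x * expE (s x)) : ℝ) : EReal)
        ≤ ((KL P Q - 1 : ℝ) : EReal)) := by
  classical
  have main : ∀ s : S → EReal, (∀ x, s x ≠ ⊤) →
      (∑ x, (P x : EReal) * s x) - (((∑ x, Q x * expE (s x)) : ℝ) : EReal)
        ≤ ((KL P Q - 1 : ℝ) : EReal) := by
    intro s hsT
    by_cases hbot : ∃ x, 0 < P x ∧ s x = ⊥
    · obtain ⟨x0, hx0, hsx0⟩ := hbot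
      have hterm : (P x0 : EReal) * s x0 = ⊥ := by
        rw [hsx0]
        exact EReal.coe_mul_bot_of_pos hx0
      have hsum : (∑ x, (P x : EReal) * s x) = ⊥ := by
        rw [← Finset.add_sum_erase _ _ (Finset.mem_univ x0), hterm, EReal.bot_add]
      rw [hsum]
      rw [sub_eq_add_neg, EReal.bot_add]
      exact bot_le
    · push_neg at hbot
      have hterm : ∀ x, (P x : EReal) * s x
          = (((if 0 < P x then P x * (s x).toReal else 0 : ℝ)) : EReal) := by
        intro x
        by_cases h : 0 < P x
        · have hb := hbot x h
          have : s x = ((s x).toReal : EReal) := (EReal.coe_toReal (hsT x) hb).symm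
          rw [this, ← EReal.coe_mul]
          simp [h]
        · have : P x = 0 := le_antisymm (not_lt.mp h) (hP0 x)
          simp [this, h, EReal.zero_mul]
      have hsum : (∑ x, (P x : EReal) * s x)
          = (((∑ x, if 0 < P x then P x * (s x).toReal else 0 : ℝ)) : EReal) := by
        rw [Finset.sum_congr rfl (fun x _ => hterm x)]
        exact (map_sum (⟨⟨Real.toEReal, EReal.coe_zero⟩, EReal.coe_add⟩ : ℝ →+ EReal) _ _).symm
      rw [hsum, ← EReal.coe_sub, EReal.coe_le_coe_iff]
      have step : ∀ x, (if 0 < P x then P x * (s x).toReal else 0) - Q x * expE (s x)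
          ≤ (if 0 < P x then P x * Real.log (P x / Q x) else 0)
            - (if 0 < P x then P x else 0) := by
        intro x
        by_cases h : 0 < P x
        · have hb := hbot x h
          have hE : expE (s x) = Real.exp (s x).toReal := by
            simp [expE, hb]
          simp only [h, if_pos, hE]
          exact key_ineq _ _ _ h (hQ0 x)
        · have hEnn : 0 ≤ expE (s x) := by
            unfold expE
            split
            · exact le_refl 0
            · exact (Real.exp_pos _).le
          simp only [if_neg h]
          have : 0 ≤ Q x * expE (s x) := mul_nonneg (hQ0 x).le hEnn
          linarith
      calc (∑ x, if 0 < P x then P x * (s x).toReal else 0) - ∑ x, Q x * expE (s x)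
          = ∑ x, ((if 0 < P x then P x * (s x).toReal else 0) - Q x * expE (s x)) := by
            rw [Finset.sum_sub_distrib]
        _ ≤ ∑ x, ((if 0 < P x then P x * Real.log (P x / Q x) else 0)
              - (if 0 < P x then P x else 0)) :=
            Finset.sum_le_sum (fun x _ => step x)
        _ = KL P Q - 1 := by
            rw [Finset.sum_sub_distrib, sum_pos_part P hP0 hP1]; rfl
  constructor
  · -- equality at the optimizer
    set s : S → EReal := fun x => if 0 < P x then ((Real.log (P x / Q x) : ℝ) : EReal) else ⊥
      with hs
    have h1 : (∑ x, (P x : EReal) * s x) = ((KL P Q : ℝ) : EReal) := by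
      have hterm : ∀ x, (P x : EReal) * s x
          = (((if 0 < P x then P x * Real.log (P x / Q x) else 0 : ℝ)) : EReal) := by
        intro x
        by_cases h : 0 < P x
        · simp only [hs, h, if_pos, ← EReal.coe_mul]
        · have : P x = 0 := le_antisymm (not_lt.mp h) (hP0 x)
          simp [hs, this, h, EReal.zero_mul]
      rw [Finset.sum_congr rfl (fun x _ => hterm x)]
      exact (map_sum (⟨⟨Real.toEReal, EReal.coe_zero⟩, EReal.coe_add⟩ : ℝ →+ EReal)
        (fun x => if 0 < P x then P x * Real.log (P x / Q x) else 0) Finset.univ).symm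
    have h2 : (∑ x, Q x * expE (s x)) = 1 := by
      have hterm : ∀ x, Q x * expE (s x) = (if 0 < P x then P x else 0) := by
        intro x
        by_cases h : 0 < P x
        · have : expE (s x) = P x / Q x := by
            simp only [hs, h, if_pos, expE]
            rw [if_neg (by exact EReal.coe_ne_bot _)]
            rw [EReal.toReal_coe, Real.exp_log (div_pos h (hQ0 x))]
          rw [this, if_pos h, mul_comm]
          exact div_mul_cancel₀ _ (hQ0 x).ne'
        · simp [hs, h, expE]
      rw [Finset.sum_congr rfl (fun x _ => hterm x), sum_pos_part P hP0 hP1]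
    rw [h1, h2, ← EReal.coe_sub]
  · exact main
end

section
/- Let (z', z_1) be distributed according to a pmf P on Z × Z and let z_2, ..., z_N be i.i.d. from Q(·|z') (the conditional of a strictly positive pmf Q on Z × Z with the same z'-marginal as P), independent of z_1 given z'. Then for the optimal critic s*(z', z) = log(dP/dQ)(z', z), the expectation E[ (exp(s*(z', z)) ) / ( (1/N) Σ_{j=1}^N exp(s*(z', z_j)) ) ] computed with z ~ Q(·|z') fresh and independent equals 1 in expectation over the negatives; consequently, the plug-in InfoNCE objective with critic s* is bounded above by D_KL(P || Q). -/
open Finset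

/-- Conditional pmf `Q(z | z')` of a joint pmf `Q` on `Z × Z`. -/
noncomputable def condQ {Z : Type*} [Fintype Z] (Q : Z × Z → ℝ) (z' z : Z) : ℝ :=
  Q (z', z) / ∑ t, Q (z', t)

lemma key {Z : Type*} [Fintype Z] (M : ℕ) (q : Z → ℝ)
    (hq1 : ∑ z, q z = 1) (g : Z → ℝ) (hg : ∀ z, 0 < g z) :
    ∑ z, q z * ∑ w : Fin M → Z, (∏ j, q (w j)) *
      (g z / ((1 / ((M : ℝ) + 1)) * (g z + ∑ j, g (w j)))) = 1 := by
  classical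
  set c : ℝ := 1 / ((M : ℝ) + 1) with hc
  have hc0 : 0 < c := by positivity
  set F : (Fin (M+1) → Z) → Fin (M+1) → ℝ := fun v i =>
    (∏ j, q (v j)) * (g (v i) / (c * ∑ j, g (v j))) with hF
  set T : Fin (M+1) → ℝ := fun i => ∑ v : Fin (M+1) → Z, F v i with hT
  have hsumg : ∀ v : Fin (M+1) → Z, 0 < ∑ j, g (v j) := fun v =>
    Finset.sum_pos (fun j _ => hg _) ⟨0, mem_univ _⟩
  -- LHS equals T 0
  have hL : ∑ z, q z * ∑ w : Fin M → Z, (∏ j, q (w j)) *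
      (g z / (c * (g z + ∑ j, g (w j)))) = T 0 := by
    rw [hT]
    simp_rw [Finset.mul_sum]
    rw [← Fintype.sum_prod_type']
    refine Fintype.sum_equiv (Fin.consEquiv fun _ => Z) _ (fun v => F v 0) fun p => ?_
    obtain ⟨z, w⟩ := p
    simp only [hF, Fin.consEquiv_apply, Fin.prod_univ_succ, Fin.sum_univ_succ,
      Fin.cons_zero, Fin.cons_succ]
    ring
  -- T i = T 0
  have hTi : ∀ i, T i = T 0 := by
    intro i
    rw [hT]
    refine Fintype.sum_equiv ((Equiv.swap (0 : Fin (M+1)) i).arrowCongr (Equiv.refl Z))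
      (fun v => F v i) (fun v => F v 0) fun v => ?_
    simp only [hF, Equiv.arrowCongr_apply, Equiv.refl_symm, Equiv.coe_refl,
      Function.comp, Equiv.symm_swap, id]
    rw [Equiv.prod_comp (Equiv.swap (0 : Fin (M+1)) i) (fun j => q (v j)),
      Equiv.sum_comp (Equiv.swap (0 : Fin (M+1)) i) (fun j => g (v j)),
      Equiv.swap_apply_left]
  -- sum of T
  have hsum : ∑ i, T i = (M : ℝ) + 1 := by
    rw [hT, Finset.sum_comm]
    have key2 : ∀ v : Fin (M+1) → Z, ∑ i, F v i = ((M : ℝ) + 1) * ∏ j, q (v j) := by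
      intro v
      have hS : (0:ℝ) < ∑ j, g (v j) := hsumg v
      have e1 : ∑ i, F v i = (∏ j, q (v j)) * ((∑ i, g (v i)) / (c * ∑ j, g (v j))) := by
        rw [hF, ← Finset.mul_sum, ← Finset.sum_div]
      have e2 : (∑ i, g (v i)) / (c * ∑ j, g (v j)) = (M : ℝ) + 1 := by
        rw [hc]; field_simp
      rw [e1, e2, mul_comm]
    simp only [key2]
    rw [← Finset.mul_sum]
    have e3 : ∑ v : Fin (M+1) → Z, ∏ j, q (v j) = 1 := by
      have := Finset.prod_univ_sum (fun _ : Fin (M+1) => (univ : Finset Z)) (fun _ z => q z)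
      rw [Fintype.piFinset_univ] at this
      rw [← this]
      simp [hq1]
    rw [e3, mul_one]
  have h2 : ((M : ℝ) + 1) * T 0 = (M : ℝ) + 1 := by
    calc ((M : ℝ) + 1) * T 0 = ∑ i : Fin (M+1), T i := by
          rw [Finset.sum_congr rfl fun i _ => hTi i, Finset.sum_const, Finset.card_univ,
            Fintype.card_fin, nsmul_eq_mul]
          push_cast; ring
      _ = (M : ℝ) + 1 := hsum
  have hT0 : T 0 = 1 := mul_left_cancel₀ (by positivity) (h2.trans (mul_one _).symm)
  rw [hL, hT0]

lemma pisum {Z : Type*} [Fintype Z] (M : ℕ) (q : Z → ℝ) (hq1 : ∑ z, q z = 1) :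
    ∑ w : Fin M → Z, ∏ j, q (w j) = 1 := by
  have h := Finset.prod_univ_sum (fun _ : Fin M => (univ : Finset Z)) (fun _ z => q z)
  rw [Fintype.piFinset_univ] at h
  rw [← h]; simp [hq1]

lemma stmt15_aux {Z : Type*} [Fintype Z] [DecidableEq Z] (M : ℕ)
    (P Q : Z × Z → ℝ)
    (hP0 : ∀ p, 0 ≤ P p) (hP1 : ∑ p, P p = 1)
    (hQ0 : ∀ p, 0 < Q p) (hQ1 : ∑ p, Q p = 1)
    (hmarg : ∀ z' : Z, ∑ z, P (z', z) = ∑ z, Q (z', z)) :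
    (∑ z' : Z, (∑ z1, P (z', z1)) *
        ∑ z : Z, condQ Q z' z *
          ∑ w : Fin M → Z, (∏ j, condQ Q z' (w j)) *
            (Real.exp (Real.log (P (z', z) / Q (z', z))) /
              ((1 / ((M : ℝ) + 1)) *
                (Real.exp (Real.log (P (z', z) / Q (z', z))) +
                  ∑ j : Fin M, Real.exp (Real.log (P (z', w j) / Q (z', w j))))))
      = 1) ∧
    (∑ z' : Z, ∑ z1 : Z, P (z', z1) *
        ∑ w : Fin M → Z, (∏ j, condQ Q z' (w j)) *
          Real.log (Real.exp (Real.log (P (z', z1) / Q (z', z1))) /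
            ((1 / ((M : ℝ) + 1)) *
              (Real.exp (Real.log (P (z', z1) / Q (z', z1))) +
                ∑ j : Fin M, Real.exp (Real.log (P (z', w j) / Q (z', w j))))))
      ≤ KL P Q) := by
  have hZ : Nonempty Z := by
    rcases isEmpty_or_nonempty Z with h | h
    · exfalso; rw [Fintype.sum_empty] at hQ1; exact one_ne_zero hQ1.symm
    · exact h
  have hMq : ∀ z', 0 < ∑ t, Q (z', t) := fun z' =>
    Finset.sum_pos (fun t _ => hQ0 _) univ_nonempty
  have hq1 : ∀ z', ∑ z, condQ Q z' z = 1 := by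
    intro z'; unfold condQ; rw [← Finset.sum_div]; exact div_self (hMq z').ne'
  have hq0 : ∀ z' z, 0 < condQ Q z' z := fun z' z => div_pos (hQ0 _) (hMq z')
  have hπ1 : ∀ z', ∑ w : Fin M → Z, ∏ j, condQ Q z' (w j) = 1 := fun z' =>
    pisum M _ (hq1 z')
  have hπ0 : ∀ (z' : Z) (w : Fin M → Z), 0 ≤ ∏ j, condQ Q z' (w j) := fun z' w =>
    Finset.prod_nonneg fun j _ => (hq0 _ _).le
  have hG : ∀ a b : Z, (0:ℝ) < Real.exp (Real.log (P (a, b) / Q (a, b))) :=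
    fun a b => Real.exp_pos _
  have hkey : ∀ z' : Z,
      ∑ z : Z, condQ Q z' z *
          ∑ w : Fin M → Z, (∏ j, condQ Q z' (w j)) *
            (Real.exp (Real.log (P (z', z) / Q (z', z))) /
              ((1 / ((M : ℝ) + 1)) *
                (Real.exp (Real.log (P (z', z) / Q (z', z))) +
                  ∑ j : Fin M, Real.exp (Real.log (P (z', w j) / Q (z', w j)))))) = 1 :=
    fun z' => key M (condQ Q z') (hq1 z')
      (fun z => Real.exp (Real.log (P (z', z) / Q (z', z)))) (fun z => hG z' z)
  constructor
  · calc ∑ z' : Z, (∑ z1, P (z', z1)) *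
        ∑ z : Z, condQ Q z' z *
          ∑ w : Fin M → Z, (∏ j, condQ Q z' (w j)) *
            (Real.exp (Real.log (P (z', z) / Q (z', z))) /
              ((1 / ((M : ℝ) + 1)) *
                (Real.exp (Real.log (P (z', z) / Q (z', z))) +
                  ∑ j : Fin M, Real.exp (Real.log (P (z', w j) / Q (z', w j))))))
        = ∑ z' : Z, ∑ z1, P (z', z1) := by
          refine Finset.sum_congr rfl fun z' _ => ?_
          rw [hkey z', mul_one]
      _ = 1 := by rw [← Fintype.sum_prod_type]; exact hP1
  · -- Part 2
    have hD : ∀ (z' z1 : Z) (w : Fin M → Z), 0 < (1 / ((M : ℝ) + 1)) *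
        (Real.exp (Real.log (P (z', z1) / Q (z', z1))) +
          ∑ j : Fin M, Real.exp (Real.log (P (z', w j) / Q (z', w j)))) := by
      intro z' z1 w
      have h2 : (0:ℝ) ≤ ∑ j : Fin M, Real.exp (Real.log (P (z', w j) / Q (z', w j))) :=
        Finset.sum_nonneg fun j _ => (hG _ _).le
      have h1 := hG z' z1
      positivity
    -- pointwise log bound
    have hlogb : ∀ (z' z1 : Z) (w : Fin M → Z),
        Real.log (Real.exp (Real.log (P (z', z1) / Q (z', z1))) /
            ((1 / ((M : ℝ) + 1)) *
              (Real.exp (Real.log (P (z', z1) / Q (z', z1))) +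
                ∑ j : Fin M, Real.exp (Real.log (P (z', w j) / Q (z', w j))))))
          ≤ Real.log (P (z', z1) / Q (z', z1)) +
            (1 / ((1 / ((M : ℝ) + 1)) *
              (Real.exp (Real.log (P (z', z1) / Q (z', z1))) +
                ∑ j : Fin M, Real.exp (Real.log (P (z', w j) / Q (z', w j))))) - 1) := by
      intro z' z1 w
      rw [Real.log_div (hG z' z1).ne' (hD z' z1 w).ne', Real.log_exp]
      have h3 := Real.log_le_sub_one_of_pos (one_div_pos.mpr (hD z' z1 w))
      rw [Real.log_div one_ne_zero (hD z' z1 w).ne', Real.log_one] at h3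
      linarith
    -- step 1 : bound by linearized objective
    refine le_trans (Finset.sum_le_sum fun z' _ => Finset.sum_le_sum fun z1 _ =>
      mul_le_mul_of_nonneg_left (Finset.sum_le_sum fun w _ =>
        mul_le_mul_of_nonneg_left (hlogb z' z1 w) (hπ0 z' w)) (hP0 _)) ?_
    -- inner sum computation
    have hinner : ∀ z' z1 : Z,
        ∑ w : Fin M → Z, (∏ j, condQ Q z' (w j)) *
          (Real.log (P (z', z1) / Q (z', z1)) +
            (1 / ((1 / ((M : ℝ) + 1)) *
              (Real.exp (Real.log (P (z', z1) / Q (z', z1))) +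
                ∑ j : Fin M, Real.exp (Real.log (P (z', w j) / Q (z', w j))))) - 1))
        = Real.log (P (z', z1) / Q (z', z1)) +
          ((∑ w : Fin M → Z, (∏ j, condQ Q z' (w j)) *
            (1 / ((1 / ((M : ℝ) + 1)) *
              (Real.exp (Real.log (P (z', z1) / Q (z', z1))) +
                ∑ j : Fin M, Real.exp (Real.log (P (z', w j) / Q (z', w j))))))) - 1) := by
      intro z' z1
      rw [Finset.sum_congr rfl fun (w : Fin M → Z) _ =>
        (mul_add (∏ j, condQ Q z' (w j)) (Real.log (P (z', z1) / Q (z', z1)))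
          (1 / ((1 / ((M : ℝ) + 1)) *
              (Real.exp (Real.log (P (z', z1) / Q (z', z1))) +
                ∑ j : Fin M, Real.exp (Real.log (P (z', w j) / Q (z', w j))))) - 1)),
        Finset.sum_add_distrib, ← Finset.sum_mul, hπ1 z', one_mul]
      congr 1
      rw [Finset.sum_congr rfl fun (w : Fin M → Z) _ =>
        (mul_sub (∏ j, condQ Q z' (w j))
          (1 / ((1 / ((M : ℝ) + 1)) *
              (Real.exp (Real.log (P (z', z1) / Q (z', z1))) +
                ∑ j : Fin M, Real.exp (Real.log (P (z', w j) / Q (z', w j)))))) 1),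
        Finset.sum_sub_distrib]
      simp [hπ1 z']
    -- middle term bound
    have hmid : ∑ z' : Z, ∑ z1 : Z, P (z', z1) *
        (∑ w : Fin M → Z, (∏ j, condQ Q z' (w j)) *
          (1 / ((1 / ((M : ℝ) + 1)) *
            (Real.exp (Real.log (P (z', z1) / Q (z', z1))) +
              ∑ j : Fin M, Real.exp (Real.log (P (z', w j) / Q (z', w j))))))) ≤ 1 := by
      have hPle : ∀ z' z1 : Z, P (z', z1) ≤ Q (z', z1) *
          Real.exp (Real.log (P (z', z1) / Q (z', z1))) := by
        intro z' z1
        rcases (hP0 (z', z1)).eq_or_lt with h | h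
        · rw [← h]; exact mul_nonneg (hQ0 _).le (Real.exp_pos _).le
        · rw [Real.exp_log (div_pos h (hQ0 _)), mul_comm,
            div_mul_cancel₀ _ (hQ0 (z', z1)).ne']
      have step : ∀ z' z1 : Z, P (z', z1) *
          (∑ w : Fin M → Z, (∏ j, condQ Q z' (w j)) *
            (1 / ((1 / ((M : ℝ) + 1)) *
              (Real.exp (Real.log (P (z', z1) / Q (z', z1))) +
                ∑ j : Fin M, Real.exp (Real.log (P (z', w j) / Q (z', w j)))))))
          ≤ Q (z', z1) * ∑ w : Fin M → Z, (∏ j, condQ Q z' (w j)) *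
            (Real.exp (Real.log (P (z', z1) / Q (z', z1))) /
              ((1 / ((M : ℝ) + 1)) *
                (Real.exp (Real.log (P (z', z1) / Q (z', z1))) +
                  ∑ j : Fin M, Real.exp (Real.log (P (z', w j) / Q (z', w j)))))) := by
        intro z' z1
        have hs0 : (0:ℝ) ≤ ∑ w : Fin M → Z, (∏ j, condQ Q z' (w j)) *
            (1 / ((1 / ((M : ℝ) + 1)) *
              (Real.exp (Real.log (P (z', z1) / Q (z', z1))) +
                ∑ j : Fin M, Real.exp (Real.log (P (z', w j) / Q (z', w j)))))) :=
          Finset.sum_nonneg fun w _ => mul_nonneg (hπ0 z' w)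
            (one_div_nonneg.mpr (hD z' z1 w).le)
        calc P (z', z1) * _ ≤ (Q (z', z1) *
              Real.exp (Real.log (P (z', z1) / Q (z', z1)))) * _ :=
            mul_le_mul_of_nonneg_right (hPle z' z1) hs0
          _ = _ := by
            rw [mul_assoc]
            congr 1
            rw [Finset.mul_sum]
            refine Finset.sum_congr rfl fun w _ => ?_
            ring
      calc ∑ z' : Z, ∑ z1 : Z, P (z', z1) * _ ≤ ∑ z' : Z, ∑ z1 : Z, Q (z', z1) *
            ∑ w : Fin M → Z, (∏ j, condQ Q z' (w j)) *
              (Real.exp (Real.log (P (z', z1) / Q (z', z1))) /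
                ((1 / ((M : ℝ) + 1)) *
                  (Real.exp (Real.log (P (z', z1) / Q (z', z1))) +
                    ∑ j : Fin M, Real.exp (Real.log (P (z', w j) / Q (z', w j)))))) :=
          Finset.sum_le_sum fun z' _ => Finset.sum_le_sum fun z1 _ => step z' z1
        _ = ∑ z' : Z, (∑ t, Q (z', t)) *
            ∑ z1 : Z, condQ Q z' z1 *
              ∑ w : Fin M → Z, (∏ j, condQ Q z' (w j)) *
                (Real.exp (Real.log (P (z', z1) / Q (z', z1))) /
                  ((1 / ((M : ℝ) + 1)) *
                    (Real.exp (Real.log (P (z', z1) / Q (z', z1))) +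
                      ∑ j : Fin M, Real.exp (Real.log (P (z', w j) / Q (z', w j)))))) := by
          refine Finset.sum_congr rfl fun z' _ => ?_
          rw [Finset.mul_sum]
          refine Finset.sum_congr rfl fun z1 _ => ?_
          rw [← mul_assoc]
          congr 1
          unfold condQ
          rw [eq_comm, mul_comm, div_mul_cancel₀ _ (hMq z').ne']
        _ = ∑ z' : Z, (∑ t, Q (z', t)) := by
          refine Finset.sum_congr rfl fun z' _ => ?_
          rw [hkey z', mul_one]
        _ = 1 := by rw [← Fintype.sum_prod_type]; exact hQ1
    -- KL identity
    have hKL : ∑ z' : Z, ∑ z1 : Z, P (z', z1) * Real.log (P (z', z1) / Q (z', z1))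
        = KL P Q := by
      unfold KL
      rw [Fintype.sum_prod_type]
      refine Finset.sum_congr rfl fun z' _ => Finset.sum_congr rfl fun z1 _ => ?_
      rcases (hP0 (z', z1)).eq_or_lt with h | h
      · rw [if_neg (by rw [← h]; exact lt_irrefl 0), ← h, zero_mul]
      · rw [if_pos h]
    -- combine
    have expand : ∑ z' : Z, ∑ z1 : Z, P (z', z1) *
        ∑ w : Fin M → Z, (∏ j, condQ Q z' (w j)) *
          (Real.log (P (z', z1) / Q (z', z1)) +
            (1 / ((1 / ((M : ℝ) + 1)) *
              (Real.exp (Real.log (P (z', z1) / Q (z', z1))) +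
                ∑ j : Fin M, Real.exp (Real.log (P (z', w j) / Q (z', w j))))) - 1))
        = (∑ z' : Z, ∑ z1 : Z, P (z', z1) * Real.log (P (z', z1) / Q (z', z1)))
          + ((∑ z' : Z, ∑ z1 : Z, P (z', z1) *
            (∑ w : Fin M → Z, (∏ j, condQ Q z' (w j)) *
              (1 / ((1 / ((M : ℝ) + 1)) *
                (Real.exp (Real.log (P (z', z1) / Q (z', z1))) +
                  ∑ j : Fin M, Real.exp (Real.log (P (z', w j) / Q (z', w j))))))))
            - ∑ z' : Z, ∑ z1 : Z, P (z', z1)) := by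
      rw [← Finset.sum_sub_distrib, ← Finset.sum_add_distrib]
      refine Finset.sum_congr rfl fun z' _ => ?_
      rw [← Finset.sum_sub_distrib, ← Finset.sum_add_distrib]
      refine Finset.sum_congr rfl fun z1 _ => ?_
      rw [hinner z' z1]
      ring
    rw [expand, hKL]
    have hPsum : ∑ z' : Z, ∑ z1 : Z, P (z', z1) = 1 := by
      rw [← Fintype.sum_prod_type]; exact hP1
    rw [hPsum]
    linarith [hmid]

/-- with the optimal critic `s*(z',z) = log (P(z',z)/Q(z',z))`, the expected
softmax ratio over exchangeable samples from `Q(·|z')` equals `1`, and consequently the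
plug-in InfoNCE objective with critic `s*` is bounded above by `D_KL(P‖Q)`. -/
theorem stmt_15 {Z : Type*} [Fintype Z] [DecidableEq Z] (N : ℕ) (hN : 1 ≤ N)
    (P Q : Z × Z → ℝ)
    (hP0 : ∀ p, 0 ≤ P p) (hP1 : ∑ p, P p = 1)
    (hQ0 : ∀ p, 0 < Q p) (hQ1 : ∑ p, Q p = 1)
    (hmarg : ∀ z' : Z, ∑ z, P (z', z) = ∑ z, Q (z', z)) :
    (∑ z' : Z, (∑ z1, P (z', z1)) *
        ∑ z : Z, condQ Q z' z *
          ∑ w : Fin (N - 1) → Z, (∏ j, condQ Q z' (w j)) *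
            (Real.exp (Real.log (P (z', z) / Q (z', z))) /
              ((1 / (N : ℝ)) *
                (Real.exp (Real.log (P (z', z) / Q (z', z))) +
                  ∑ j : Fin (N - 1), Real.exp (Real.log (P (z', w j) / Q (z', w j))))))
      = 1) ∧
    (∑ z' : Z, ∑ z1 : Z, P (z', z1) *
        ∑ w : Fin (N - 1) → Z, (∏ j, condQ Q z' (w j)) *
          Real.log (Real.exp (Real.log (P (z', z1) / Q (z', z1))) /
            ((1 / (N : ℝ)) *
              (Real.exp (Real.log (P (z', z1) / Q (z', z1))) +
                ∑ j : Fin (N - 1), Real.exp (Real.log (P (z', w j) / Q (z', w j))))))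
      ≤ KL P Q) := by
  obtain ⟨M, rfl⟩ : ∃ M, N = M + 1 := ⟨N - 1, (Nat.succ_pred_eq_of_pos hN).symm⟩
  push_cast
  exact stmt15_aux M P Q hP0 hP1 hQ0 hQ1 hmarg
end

section
/- For pmfs P, Q on a finite set with Q strictly positive and any bounded function s, the 'shifted' critic s_c = s + c for a constant c ∈ ℝ satisfies: sup_c [E_P[s_c] - E_Q[exp(s_c)] + 1] = E_P[s] - log E_Q[exp(s)], i.e., optimizing the additive constant in the Nguyen variational bound recovers the Donsker–Varadhan bound. -/
open Finset

/-- optimizing the additive constant in the Nguyen variational bound recovers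
the Donsker–Varadhan bound: `sup_c (E_P[s+c] - E_Q[exp(s+c)] + 1) = E_P[s] - log E_Q[exp s]`,
and hence `E_P[s] - log E_Q[exp s] ≤ D_KL(P‖Q)`. -/
theorem stmt_19 {S : Type*} [Fintype S] (P Q : S → ℝ)
    (hP0 : ∀ x, 0 ≤ P x) (hP1 : ∑ x, P x = 1)
    (hQ0 : ∀ x, 0 < Q x) (hQ1 : ∑ x, Q x = 1)
    (s : S → ℝ) :
    (⨆ c : ℝ, ((∑ x, P x * (s x + c)) - (∑ x, Q x * Real.exp (s x + c)) + 1)) =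
        (∑ x, P x * s x) - Real.log (∑ x, Q x * Real.exp (s x)) ∧
      (∑ x, P x * s x) - Real.log (∑ x, Q x * Real.exp (s x)) ≤ KL P Q := by
  classical
  set E := ∑ x, P x * s x with hE
  set Z := ∑ x, Q x * Real.exp (s x) with hZdef
  have hne : (Finset.univ : Finset S).Nonempty := by
    rcases (Finset.univ : Finset S).eq_empty_or_nonempty with h | h
    · rw [h] at hP1; simp at hP1
    · exact h
  have hZ : 0 < Z := Finset.sum_pos (fun x _ => mul_pos (hQ0 x) (Real.exp_pos _)) hne
  have hsum1 : ∀ c : ℝ, (∑ x, P x * (s x + c)) = E + c := by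
    intro c
    simp only [mul_add, Finset.sum_add_distrib, ← Finset.sum_mul, hP1, one_mul, hE]
  have hsum2 : ∀ c : ℝ, (∑ x, Q x * Real.exp (s x + c)) = Z * Real.exp c := by
    intro c
    simp only [Real.exp_add, hZdef, Finset.sum_mul]
    ring_nf
    exact Finset.sum_congr rfl (fun x _ => by ring)
  have hub : ∀ c : ℝ, (∑ x, P x * (s x + c)) - (∑ x, Q x * Real.exp (s x + c)) + 1
      ≤ E - Real.log Z := by
    intro c
    rw [hsum1, hsum2]
    have h := Real.add_one_le_exp (c + Real.log Z)
    rw [Real.exp_add, Real.exp_log hZ] at h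
    nlinarith
  have hatt : (∑ x, P x * (s x + (-Real.log Z))) -
      (∑ x, Q x * Real.exp (s x + (-Real.log Z))) + 1 = E - Real.log Z := by
    rw [hsum1, hsum2, Real.exp_neg, Real.exp_log hZ]
    field_simp
    ring
  have hsup : (⨆ c : ℝ, ((∑ x, P x * (s x + c)) - (∑ x, Q x * Real.exp (s x + c)) + 1))
      = E - Real.log Z := by
    apply le_antisymm
    · exact ciSup_le hub
    · rw [← hatt]
      exact le_ciSup ⟨E - Real.log Z, fun y ⟨c, hc⟩ => hc ▸ hub c⟩ (-Real.log Z)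
  refine ⟨hsup, ?_⟩
  -- second part
  set A := Finset.univ.filter (fun x => 0 < P x) with hA
  have hPzero : ∀ x ∉ A, P x = 0 := by
    intro x hx
    simp only [hA, Finset.mem_filter, Finset.mem_univ, true_and, not_lt] at hx
    exact le_antisymm hx (hP0 x)
  have hEA : E = ∑ x ∈ A, P x * s x := by
    rw [hE, ← Finset.sum_filter_add_sum_filter_not Finset.univ (fun x => 0 < P x)]
    have : ∑ x ∈ Finset.univ.filter (fun x => ¬ 0 < P x), P x * s x = 0 := by
      apply Finset.sum_eq_zero
      intro x hx
      simp only [Finset.mem_filter, not_lt] at hx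
      have : P x = 0 := le_antisymm hx.2 (hP0 x)
      simp [this]
    rw [this, add_zero]
  have hPA : ∑ x ∈ A, P x = 1 := by
    rw [← hP1, ← Finset.sum_filter_add_sum_filter_not Finset.univ (fun x => 0 < P x)]
    have : ∑ x ∈ Finset.univ.filter (fun x => ¬ 0 < P x), P x = 0 := by
      apply Finset.sum_eq_zero
      intro x hx
      simp only [Finset.mem_filter, not_lt] at hx
      exact le_antisymm hx.2 (hP0 x)
    rw [this, add_zero]
  have hKL : KL P Q = ∑ x ∈ A, P x * Real.log (P x / Q x) := by
    rw [KL, Finset.sum_filter]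
  have hQA : ∑ x ∈ A, Q x * Real.exp (s x) ≤ Z := by
    rw [hZdef]
    exact Finset.sum_le_sum_of_subset_of_nonneg (Finset.filter_subset _ _)
      (fun x _ _ => le_of_lt (mul_pos (hQ0 x) (Real.exp_pos _)))
  have key : ∀ x ∈ A, P x * s x - P x * Real.log (P x / Q x) - P x * Real.log Z
      ≤ Q x * Real.exp (s x) / Z - P x := by
    intro x hx
    have hPx : 0 < P x := by
      simpa [hA] using hx
    set t := Q x * Real.exp (s x) / (P x * Z) with ht
    have htpos : 0 < t := div_pos (mul_pos (hQ0 x) (Real.exp_pos _)) (mul_pos hPx hZ)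
    have hlog : Real.log t ≤ t - 1 := Real.log_le_sub_one_of_pos htpos
    have hlogt : Real.log t = s x - Real.log (P x / Q x) - Real.log Z := by
      rw [ht, Real.log_div (ne_of_gt (mul_pos (hQ0 x) (Real.exp_pos _))) (ne_of_gt (mul_pos hPx hZ)), Real.log_mul (ne_of_gt (hQ0 x))
        (ne_of_gt (Real.exp_pos _)), Real.log_mul (ne_of_gt hPx) (ne_of_gt hZ),
        Real.log_exp, Real.log_div (ne_of_gt hPx) (ne_of_gt (hQ0 x))]
      ring
    have := mul_le_mul_of_nonneg_left hlog (le_of_lt hPx)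
    rw [hlogt] at this
    have ht' : P x * t = Q x * Real.exp (s x) / Z := by
      rw [ht]; field_simp
    nlinarith [this]
  have hsumkey := Finset.sum_le_sum key
  rw [Finset.sum_sub_distrib, Finset.sum_sub_distrib, Finset.sum_sub_distrib,
    ← Finset.sum_mul, hPA, one_mul, ← Finset.sum_div] at hsumkey
  have hdiv : (∑ x ∈ A, Q x * Real.exp (s x)) / Z ≤ 1 := by
    rw [div_le_one hZ]; exact hQA
  rw [hKL, hEA]
  linarith
end
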